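/- Let u be a smooth function on a 2D Riemannian manifold satisfying ∇∇u − (1/2)(Δu)g = T for a given trace-free symmetric 2-tensor field T. Then the third covariant derivatives of u are determined: ∇_i∇_j∇_k u = g_{jk}(−K∇_i u + ∇^p T_{ip}) + ∇_i T_{jk}, where K is the Gaussian curvature. Moreover, the integrability condition −∇_2 K·∇_1 u + ∇_1 K·∇_2 u = ∇_1∇^p T_{2p} − ∇_2∇^p T_{1p} holds, i.e., (∇^⊥K)u = Φ where Φ = (det g)^{-1/2}(∇_1∇^p T_{2p} − ∇_2∇^p T_{1p}). -/

import Mathlib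

open scoped BigOperators

/-- Partial derivative `∂_p` (`p = 0 ↦ ∂ₓ`, `p = 1 ↦ ∂_y`). -/
noncomputable def pder (p : Fin 2) (f : ℝ × ℝ → ℝ) (q : ℝ × ℝ) : ℝ :=
  fderiv ℝ f q (if p = 0 then ((1 : ℝ), (0 : ℝ)) else (0, 1))

/-- Christoffel symbols `Γ^r_{p i}` of the metric `e^{2μ}(dx² + dy²)`. -/
noncomputable def chr (μ : ℝ × ℝ → ℝ) (p i r : Fin 2) (q : ℝ × ℝ) : ℝ :=
  if r = 0 then
    (if p = i then (if p = 0 then pder 0 μ q else -(pder 0 μ q)) else pder 1 μ q)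
  else
    (if p = i then (if p = 0 then -(pder 1 μ q) else pder 1 μ q) else pder 0 μ q)

/-- The metric tensor `g_{ij} = e^{2μ}δ_{ij}` in isothermal coordinates. -/
noncomputable def gmet (μ : ℝ × ℝ → ℝ) (i j : Fin 2) (q : ℝ × ℝ) : ℝ :=
  if i = j then Real.exp (2 * μ q) else 0

/-- Covariant Hessian `∇_i∇_j u` of a function. -/
noncomputable def hess (μ u : ℝ × ℝ → ℝ) (i j : Fin 2) (q : ℝ × ℝ) : ℝ :=
  pder i (pder j u) q - ∑ p, chr μ i j p q * pder p u q

/-- Riemannian Laplacian `Δu = e^{-2μ}(uₓₓ + u_yy)`. -/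
noncomputable def lap (μ u : ℝ × ℝ → ℝ) (q : ℝ × ℝ) : ℝ :=
  Real.exp (-(2 : ℝ) * μ q) * (pder 0 (pder 0 u) q + pder 1 (pder 1 u) q)

/-- Gaussian curvature `K = -e^{-2μ}(μₓₓ + μ_yy)` of the metric `e^{2μ}(dx²+dy²)`. -/
noncomputable def gauss (μ : ℝ × ℝ → ℝ) (q : ℝ × ℝ) : ℝ :=
  -Real.exp (-(2 : ℝ) * μ q) * (pder 0 (pder 0 μ) q + pder 1 (pder 1 μ) q)

/-- Covariant derivative `∇_p w_i` of a covector field. -/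
noncomputable def cov1 (μ : ℝ × ℝ → ℝ) (w : Fin 2 → ℝ × ℝ → ℝ) (p i : Fin 2)
    (q : ℝ × ℝ) : ℝ :=
  pder p (w i) q - ∑ r, chr μ p i r q * w r q

/-- Covariant derivative `∇_p h_{ij}` of a 2-tensor field. -/
noncomputable def cov2 (μ : ℝ × ℝ → ℝ) (h : Fin 2 → Fin 2 → ℝ × ℝ → ℝ)
    (p i j : Fin 2) (q : ℝ × ℝ) : ℝ :=
  pder p (h i j) q - ∑ r, chr μ p i r q * h r j q - ∑ r, chr μ p j r q * h i r q

/-- `(δT)_i = ∇^p T_{ip} = g^{pq} ∇_q T_{ip}`. -/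
noncomputable def divT (μ : ℝ × ℝ → ℝ) (T : Fin 2 → Fin 2 → ℝ × ℝ → ℝ) (i : Fin 2)
    (q : ℝ × ℝ) : ℝ :=
  Real.exp (-(2 : ℝ) * μ q) * (cov2 μ T 0 i 0 q + cov2 μ T 1 i 1 q)

section helpers
variable {f g : ℝ × ℝ → ℝ} {p r : Fin 2} {q : ℝ × ℝ} {c : ℝ}

@[fun_prop] lemma contDiff_pder (p : Fin 2) (hf : ContDiff ℝ (⊤ : ℕ∞) f) : ContDiff ℝ (⊤ : ℕ∞) (pder p f) := by
  have h : pder p f = fun q => (fderiv ℝ f q) (if p = 0 then ((1 : ℝ), (0 : ℝ)) else (0, 1)) := rfl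
  rw [h]
  exact (hf.fderiv_right (by simp)).clm_apply contDiff_const

@[fun_prop] lemma differentiable_pder (p : Fin 2) {f : ℝ × ℝ → ℝ} (hf : ContDiff ℝ (⊤ : ℕ∞) f) :
    Differentiable ℝ (pder p f) :=
  (contDiff_pder p hf).differentiable (by simp)

lemma pder_add (hf : Differentiable ℝ f) (hg : Differentiable ℝ g) :
    pder p (fun x => f x + g x) = fun q => pder p f q + pder p g q := by
  funext q; simp [pder, fderiv_fun_add (hf q) (hg q)]

lemma pder_sub (hf : Differentiable ℝ f) (hg : Differentiable ℝ g) :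
    pder p (fun x => f x - g x) = fun q => pder p f q - pder p g q := by
  funext q; simp [pder, fderiv_fun_sub (hf q) (hg q)]

lemma pder_neg : pder p (fun x => -f x) = fun q => -pder p f q := by
  funext q; simp [pder, fderiv_neg]

lemma pder_mul (hf : Differentiable ℝ f) (hg : Differentiable ℝ g) :
    pder p (fun x => f x * g x) = fun q => pder p f q * g q + f q * pder p g q := by
  funext q; simp [pder, fderiv_fun_mul (hf q) (hg q)]; ring

lemma pder_const_mul (hf : Differentiable ℝ f) :
    pder p (fun x => c * f x) = fun q => c * pder p f q := by
  funext q; simp [pder, fderiv_const_mul (hf q)]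

lemma pder_const : pder p (fun _ : ℝ × ℝ => c) = fun _ => 0 := by
  funext q; simp [pder]

lemma pder_exp (hf : Differentiable ℝ f) :
    pder p (fun x => Real.exp (f x)) = fun q => Real.exp (f q) * pder p f q := by
  funext q; simp [pder, fderiv_exp (hf q)]

lemma pder_swap (hf : ContDiff ℝ (⊤ : ℕ∞) f) : pder 1 (pder 0 f) = pder 0 (pder 1 f) := by
  funext q
  have hd : DifferentiableAt ℝ (fderiv ℝ f) q :=
    ((hf.fderiv_right (m := 1) (WithTop.coe_le_coe.mpr le_top)).differentiable one_ne_zero).differentiableAt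
  have h1 : ∀ p r : Fin 2, pder p (pder r f) q
      = fderiv ℝ (fderiv ℝ f) q (if p = 0 then ((1 : ℝ), (0 : ℝ)) else (0, 1))
          (if r = 0 then ((1 : ℝ), (0 : ℝ)) else (0, 1)) := by
    intro p r
    show fderiv ℝ (fun x => (fderiv ℝ f x) _) q _ = _
    rw [fderiv_clm_apply hd (differentiableAt_const _)]
    simp
  have hsymm : IsSymmSndFDerivAt ℝ f q := hf.contDiffAt.isSymmSndFDerivAt (by rw [minSmoothness_of_isRCLikeNormedField]; exact WithTop.coe_le_coe.mpr (le_top : (2 : ℕ∞) ≤ ⊤))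
  rw [h1, h1, hsymm.eq]

lemma divT_def (μ : ℝ × ℝ → ℝ) (T : Fin 2 → Fin 2 → ℝ × ℝ → ℝ) (i : Fin 2) :
    divT μ T i = fun q => Real.exp (-(2 : ℝ) * μ q) * (cov2 μ T 0 i 0 q + cov2 μ T 1 i 1 q) := rfl

lemma gauss_def (μ : ℝ × ℝ → ℝ) :
    gauss μ = fun q => -Real.exp (-(2 : ℝ) * μ q) * (pder 0 (pder 0 μ) q + pder 1 (pder 1 μ) q) := rfl

variable (μ : ℝ × ℝ → ℝ) (q : ℝ × ℝ)

lemma chr000 : chr μ 0 0 0 q = pder 0 μ q := rfl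
lemma chr001 : chr μ 0 0 1 q = -pder 1 μ q := rfl
lemma chr010 : chr μ 0 1 0 q = pder 1 μ q := rfl
lemma chr011 : chr μ 0 1 1 q = pder 0 μ q := rfl
lemma chr100 : chr μ 1 0 0 q = pder 1 μ q := rfl
lemma chr101 : chr μ 1 0 1 q = pder 0 μ q := rfl
lemma chr110 : chr μ 1 1 0 q = -pder 0 μ q := rfl
lemma chr111 : chr μ 1 1 1 q = pder 1 μ q := rfl
lemma gmet00 : gmet μ 0 0 q = Real.exp (2 * μ q) := rfl
lemma gmet01 : gmet μ 0 1 q = 0 := rfl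
lemma gmet10 : gmet μ 1 0 q = 0 := rfl
lemma gmet11 : gmet μ 1 1 q = Real.exp (2 * μ q) := rfl

end helpers

set_option maxHeartbeats 1000000 in
/-- Let `u` satisfy `∇∇u - (1/2)(Δu)g = T` on a surface with metric `e^{2μ}(dx²+dy²)`,
`T` a trace-free symmetric 2-tensor field.  Then all third covariant derivatives of `u`
are determined: `∇_i∇_j∇_k u = g_{jk}(-K ∇_i u + ∇^p T_{ip}) + ∇_i T_{jk}` (`K` the
Gaussian curvature), and the integrability condition
`-∇₂K·∇₁u + ∇₁K·∇₂u = ∇₁∇^pT_{2p} - ∇₂∇^pT_{1p}` holds, i.e. `(∇^⊥K)u = Φ`. -/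
theorem stmt_18 (μ u : ℝ × ℝ → ℝ) (hμ : ContDiff ℝ (⊤ : ℕ∞) μ) (hu : ContDiff ℝ (⊤ : ℕ∞) u)
    (T : Fin 2 → Fin 2 → ℝ × ℝ → ℝ) (hTsm : ∀ i j, ContDiff ℝ (⊤ : ℕ∞) (T i j))
    (hTsym : ∀ i j q, T i j q = T j i q)
    (hTtf : ∀ q, T 0 0 q + T 1 1 q = 0)
    (hMain : ∀ i j q, hess μ u i j q - (1 / 2) * lap μ u q * gmet μ i j q = T i j q) :
    (∀ (i j k : Fin 2) (q : ℝ × ℝ),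
      cov2 μ (fun j' k' => fun q' => hess μ u j' k' q') i j k q
        = gmet μ j k q * (-(gauss μ q) * pder i u q + divT μ T i q) + cov2 μ T i j k q) ∧
    (∀ q : ℝ × ℝ,
      -(pder 1 (gauss μ) q) * pder 0 u q + pder 0 (gauss μ) q * pder 1 u q
        = cov1 μ (divT μ T) 0 1 q - cov1 μ (divT μ T) 1 0 q) := by
  have hT : ∀ i j, T i j = fun q => hess μ u i j q - 1 / 2 * lap μ u q * gmet μ i j q :=
    fun i j => funext fun q => (hMain i j q).symm
  have hμd : Differentiable ℝ μ := hμ.differentiable (by simp)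
  have hud : Differentiable ℝ u := hu.differentiable (by simp)
  have h2 : ∀ n : Fin 2, n = 0 ∨ n = 1 := by decide
  constructor
  · intro i j k q
    rcases h2 i with rfl | rfl <;> rcases h2 j with rfl | rfl <;> rcases h2 k with rfl | rfl <;>
    · simp (disch := fun_prop) only [hT, cov2, cov1, divT_def, hess, lap, gauss_def,
        Fin.sum_univ_two, Fin.isValue, chr000, chr001, chr010, chr011, chr100, chr101, chr110,
        chr111, gmet00, gmet01, gmet10, gmet11, mul_zero, zero_mul, add_zero, zero_add, sub_zero,
        neg_zero, pder_add, pder_sub, pder_neg, pder_mul, pder_const_mul, pder_exp, pder_const,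
        pder_swap]
      try simp (disch := fun_prop) only [pder_add, pder_sub, pder_neg, pder_mul, pder_const_mul,
        pder_exp, pder_const, pder_swap]
      try simp only [neg_mul, Real.exp_neg]
      try field_simp
      try ring
  · intro q
    simp (disch := fun_prop) only [hT, cov2, cov1, divT_def, hess, lap, gauss_def,
      Fin.sum_univ_two, Fin.isValue, chr000, chr001, chr010, chr011, chr100, chr101, chr110,
      chr111, gmet00, gmet01, gmet10, gmet11, mul_zero, zero_mul, add_zero, zero_add, sub_zero,
      neg_zero, pder_add, pder_sub, pder_neg, pder_mul, pder_const_mul, pder_exp, pder_const,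
      pder_swap]
    try simp (disch := fun_prop) only [pder_add, pder_sub, pder_neg, pder_mul, pder_const_mul,
      pder_exp, pder_const, pder_swap]
    try simp only [neg_mul, Real.exp_neg]
    try field_simp
    try ring
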